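/- arXiv:math/0308103 — 3 statements merged into one kernel-verified Lean document; each statement's English description precedes it below -/
import Mathlib

section
/- Let v, w ∈ S_n with w ≤ v in the Bruhat order. Then the specialized double Schubert polynomial 𝔖_w(y_v; y) lies in the subring ℤ[z_1,…,z_{n−1}] where z_i = y_{i+1} − y_i, and as a polynomial in z_1,…,z_{n−1} it has nonnegative integer coefficients and is nonzero. -/
set_option maxHeartbeats 1000000
set_option synthInstance.maxHeartbeats 400000

open MvPolynomial

/-- The simple transposition `s_{i+1}` (1-based) of `Fin n`, for `i : Fin (n-1)` (0-based). -/
def sPerm {n : ℕ} (i : Fin (n - 1)) : Equiv.Perm (Fin n) :=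
  Equiv.swap ⟨i.val, by have := i.isLt; omega⟩ ⟨i.val + 1, by have := i.isLt; omega⟩

/-- The simple transposition `s_i` of `Fin n` for a 1-based index `i : ℕ`;
junk value `1` out of range. -/
def sPermN {n : ℕ} (i : ℕ) : Equiv.Perm (Fin n) :=
  if h : 1 ≤ i ∧ i ≤ n - 1 then sPerm ⟨i - 1, by omega⟩ else 1

/-- The product of the simple transpositions corresponding to a word. -/
def wordProd {n : ℕ} (l : List (Fin (n - 1))) : Equiv.Perm (Fin n) :=
  (l.map sPerm).prod

/-- The Coxeter length of a permutation: the minimal length of a word in the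
simple transpositions expressing it. -/
noncomputable def len {n : ℕ} (w : Equiv.Perm (Fin n)) : ℕ :=
  sInf {k | ∃ l : List (Fin (n - 1)), wordProd l = w ∧ l.length = k}

/-- `l` is a reduced word for `w`. -/
def IsReducedWord {n : ℕ} (l : List (Fin (n - 1))) (w : Equiv.Perm (Fin n)) : Prop :=
  wordProd l = w ∧ l.length = len w

/-- The longest permutation `w₀` of `S_n`, sending `i ↦ n+1-i` (1-based). -/
def w0 (n : ℕ) : Equiv.Perm (Fin n) := Fin.revPerm

/-- The Bruhat order: `w ≤ v` iff some reduced word for `v` contains a subword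
that is a reduced word for `w`. -/
noncomputable def bruhatLE {n : ℕ} (w v : Equiv.Perm (Fin n)) : Prop :=
  ∃ l l' : List (Fin (n - 1)), IsReducedWord l v ∧ l'.Sublist l ∧ IsReducedWord l' w

/-- The lower of the two points moved by `s_{i+1}`. -/
def fLo {n : ℕ} (i : Fin (n - 1)) : Fin n := ⟨i.val, by have := i.isLt; omega⟩

/-- The upper of the two points moved by `s_{i+1}`. -/
def fHi {n : ℕ} (i : Fin (n - 1)) : Fin n := ⟨i.val + 1, by have := i.isLt; omega⟩

/-- The family of double Schubert polynomials `𝔖_w(x;y)`, with `x`-variables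
indexed by `Sum.inl` and `y`-variables by `Sum.inr`: it is characterized by
`𝔖_{w₀} = ∏_{i+j ≤ n} (x_i - y_j)` together with the divided difference
recursion `(x_i - x_{i+1}) ∂_i 𝔖_w = 𝔖_w - s_i 𝔖_w` whenever `ℓ(w s_i) < ℓ(w)`. -/
def SchubertFamily (n : ℕ)
    (S : Equiv.Perm (Fin n) → MvPolynomial (Fin n ⊕ Fin n) ℤ) : Prop :=
  S (w0 n) =
    ∏ p ∈ Finset.univ.filter (fun p : Fin n × Fin n => p.1.val + p.2.val + 2 ≤ n),
      (X (Sum.inl p.1) - X (Sum.inr p.2)) ∧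
  ∀ (w : Equiv.Perm (Fin n)) (i : Fin (n - 1)), len (w * sPerm i) < len w →
    (X (Sum.inl (fLo i)) - X (Sum.inl (fHi i))) * S (w * sPerm i) =
      S w - rename (Equiv.sumCongr (sPerm i) (Equiv.refl (Fin n))) (S w)

/-- Specialization `x_j = y_{v(j)}` of a polynomial in `x;y`, landing in the
polynomial ring in the `y`-variables (indexed by `Fin n`). -/
noncomputable def specS {n : ℕ} (v : Equiv.Perm (Fin n)) :
    MvPolynomial (Fin n ⊕ Fin n) ℤ →ₐ[ℤ] MvPolynomial (Fin n) ℤ :=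
  aeval (Sum.elim (fun j => X (v j)) X)

namespace SchubAux

variable {n : ℕ}

lemma fLo_lt_fHi (i : Fin (n - 1)) : fLo i < fHi i := by
  simp [fLo, fHi, Fin.lt_def]

lemma sPerm_fLo (i : Fin (n - 1)) : sPerm i (fLo i) = fHi i := by
  simp [sPerm, fLo, fHi, Equiv.swap_apply_left]

lemma sPerm_fHi (i : Fin (n - 1)) : sPerm i (fHi i) = fLo i := by
  simp [sPerm, fLo, fHi, Equiv.swap_apply_right]

lemma sPerm_apply_ne (i : Fin (n - 1)) {x : Fin n} (h1 : x ≠ fLo i) (h2 : x ≠ fHi i) :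
    sPerm i x = x :=
  Equiv.swap_apply_of_ne_of_ne h1 h2

lemma sPerm_mul_self (i : Fin (n - 1)) : sPerm i * sPerm i = 1 :=
  Equiv.swap_mul_self _ _

lemma sPerm_sPerm (i : Fin (n - 1)) (x : Fin n) : sPerm i (sPerm i x) = x :=
  Equiv.swap_apply_self _ _ x

lemma sPerm_val (i : Fin (n - 1)) (x : Fin n) :
    ((sPerm i) x).val =
      if x.val = i.val then i.val + 1 else if x.val = i.val + 1 then i.val else x.val := by
  rcases eq_or_ne x (fLo i) with h | h
  · subst h; rw [sPerm_fLo]; simp [fLo, fHi]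
  · rcases eq_or_ne x (fHi i) with h2 | h2
    · subst h2; rw [sPerm_fHi]; simp [fLo, fHi]
    · rw [sPerm_apply_ne i h h2]
      have h' : x.val ≠ i.val := fun hc => h (Fin.ext hc)
      have h2' : x.val ≠ i.val + 1 := fun hc => h2 (Fin.ext hc)
      simp [h', h2']

lemma sPerm_lt_of_lt {i : Fin (n - 1)} {a b : Fin n} (hab : a < b)
    (hne : ¬(a = fLo i ∧ b = fHi i)) : sPerm i a < sPerm i b := by
  have hne' : ¬(a.val = i.val ∧ b.val = i.val + 1) := by
    intro ⟨h1, h2⟩; exact hne ⟨Fin.ext h1, Fin.ext h2⟩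
  rw [Fin.lt_def] at *
  rw [sPerm_val, sPerm_val]
  split_ifs <;> omega

/-- inversion set (pairs of positions) -/
def invSet (w : Equiv.Perm (Fin n)) : Finset (Fin n × Fin n) :=
  Finset.univ.filter (fun p => p.1 < p.2 ∧ w p.2 < w p.1)

def invN (w : Equiv.Perm (Fin n)) : ℕ := (invSet w).card

def Phi (i : Fin (n - 1)) (p : Fin n × Fin n) : Fin n × Fin n := (sPerm i p.1, sPerm i p.2)

lemma Phi_inj (i : Fin (n - 1)) : Function.Injective (Phi i) := by
  intro p q h
  simp only [Phi, Prod.mk.injEq] at h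
  exact Prod.ext ((sPerm i).injective h.1) ((sPerm i).injective h.2)

lemma mem_invSet {w : Equiv.Perm (Fin n)} {p : Fin n × Fin n} :
    p ∈ invSet w ↔ p.1 < p.2 ∧ w p.2 < w p.1 := by
  simp [invSet]

/-- key structural lemma for the inversion set under right multiplication by an
ascent transposition -/
lemma key (w : Equiv.Perm (Fin n)) (i : Fin (n - 1)) (h : w (fLo i) < w (fHi i)) :
    invSet (w * sPerm i) = insert (fLo i, fHi i) ((invSet w).image (Phi i)) ∧
      (fLo i, fHi i) ∉ (invSet w).image (Phi i) := by
  constructor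
  · ext ⟨a, b⟩
    rw [Finset.mem_insert, Finset.mem_image, mem_invSet]
    constructor
    · rintro ⟨hab, hv⟩
      simp only [Equiv.Perm.mul_apply] at hv
      by_cases ha : a = fLo i ∧ b = fHi i
      · exact Or.inl (by rw [ha.1, ha.2])
      · refine Or.inr ⟨(sPerm i a, sPerm i b), ?_, by simp [Phi, sPerm_sPerm]⟩
        rw [mem_invSet]
        exact ⟨sPerm_lt_of_lt hab ha, by simpa [sPerm_sPerm] using hv⟩
    · rintro (heq | ⟨q, hq, hPhi⟩)
      · have h1 : a = fLo i := congrArg Prod.fst heq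
        have h2 : b = fHi i := congrArg Prod.snd heq
        subst h1; subst h2
        refine ⟨fLo_lt_fHi i, ?_⟩
        simpa only [Equiv.Perm.mul_apply, sPerm_fLo, sPerm_fHi] using h
      · rw [mem_invSet] at hq
        obtain ⟨hq1, hq2⟩ := hq
        have ha : a = sPerm i q.1 := (congrArg Prod.fst hPhi).symm
        have hb : b = sPerm i q.2 := (congrArg Prod.snd hPhi).symm
        subst ha; subst hb
        refine ⟨?_, by simpa [Equiv.Perm.mul_apply, sPerm_sPerm] using hq2⟩
        apply sPerm_lt_of_lt hq1
        rintro ⟨e1, e2⟩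
        rw [e1, e2] at hq2
        exact absurd h (not_lt.2 (le_of_lt hq2))
  · rw [Finset.mem_image]
    rintro ⟨q, hq, hPhi⟩
    rw [mem_invSet] at hq
    have e1 : q.1 = fHi i := by
      have h1 : sPerm i q.1 = fLo i := congrArg Prod.fst hPhi
      have := congrArg (sPerm i) h1
      rwa [sPerm_sPerm, sPerm_fLo] at this
    have e2 : q.2 = fLo i := by
      have h2 : sPerm i q.2 = fHi i := congrArg Prod.snd hPhi
      have := congrArg (sPerm i) h2
      rwa [sPerm_sPerm, sPerm_fHi] at this
    rw [e1, e2] at hq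
    exact absurd (lt_trans hq.1 (fLo_lt_fHi i)) (lt_irrefl _)

end SchubAux

namespace SchubAux

variable {n : ℕ}

lemma wordProd_nil : wordProd ([] : List (Fin (n - 1))) = 1 := rfl

lemma wordProd_concat (l : List (Fin (n - 1))) (i : Fin (n - 1)) :
    wordProd (l ++ [i]) = wordProd l * sPerm i := by
  simp [wordProd]

lemma perm_eq_one_of_strictMono {w : Equiv.Perm (Fin n)} (h : StrictMono ⇑w) : w = 1 := by
  have hinv : StrictMono ⇑w⁻¹ := by
    intro a b hab
    rcases lt_trichotomy (w⁻¹ a) (w⁻¹ b) with hc | hc | hc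
    · exact hc
    · exact absurd ((w⁻¹).injective hc) (ne_of_lt hab)
    · have := h hc
      simp only [Equiv.Perm.inv_def, Equiv.apply_symm_apply] at this
      exact absurd (lt_trans hab this) (lt_irrefl _)
  ext x
  haveI : WellFoundedLT (Fin n) := inferInstance
  have h1 : x ≤ w x := StrictMono.le_apply (f := ⇑w) h
  have h2 : w x ≤ x := by
    have h2' : w x ≤ w⁻¹ (w x) := StrictMono.le_apply (f := ⇑w⁻¹) hinv
    simpa using h2'
  exact congrArg Fin.val (le_antisymm h2 h1)

lemma eq_one_of_no_descent {w : Equiv.Perm (Fin n)}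
    (h : ∀ i : Fin (n - 1), w (fLo i) < w (fHi i)) : w = 1 := by
  rcases n with _ | m
  · exact Subsingleton.elim _ _
  · apply perm_eq_one_of_strictMono
    rw [Fin.strictMono_iff_lt_succ]
    intro i
    have e1 : Fin.castSucc i = fLo (⟨i.val, by simp⟩ : Fin (m + 1 - 1)) :=
      Fin.ext (by simp [fLo])
    have e2 : i.succ = fHi (⟨i.val, by simp⟩ : Fin (m + 1 - 1)) :=
      Fin.ext (by simp [fHi])
    rw [e1, e2]
    exact h _

lemma eq_w0_of_no_ascent {w : Equiv.Perm (Fin n)}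
    (h : ∀ i : Fin (n - 1), w (fHi i) < w (fLo i)) : w = w0 n := by
  have key : w * (w0 n : Equiv.Perm (Fin n)) = 1 := by
    apply eq_one_of_no_descent
    intro i
    simp only [Equiv.Perm.mul_apply]
    have hlt : (w0 n : Equiv.Perm (Fin n)) (fHi i) < (w0 n) (fLo i) := by
      simp only [w0, Fin.revPerm_apply]
      rw [Fin.rev_lt_rev]
      exact fLo_lt_fHi i
    -- (w0 fHi i) and (w0 fLo i) are adjacent with w0 fHi i lower:
    -- w0 fHi i = fLo j, w0 fLo i = fHi j for suitable j
    rcases n with _ | m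
    · exact absurd i.isLt (by simp)
    · set j : Fin (m + 1 - 1) := ⟨m - 1 - i.val, by have := i.isLt; simp at this ⊢; omega⟩
      have e1 : (w0 (m+1) : Equiv.Perm (Fin (m+1))) (fHi i) = fLo j := by
        apply Fin.ext
        have hi := i.isLt
        simp only [w0, Fin.revPerm_apply, Fin.rev, fLo, fHi, j] at *
        omega
      have e2 : (w0 (m+1) : Equiv.Perm (Fin (m+1))) (fLo i) = fHi j := by
        apply Fin.ext
        have hi := i.isLt
        simp only [w0, Fin.revPerm_apply, Fin.rev, fLo, fHi, j] at *
        omega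
      rw [e1, e2]
      exact h j
  have : w * (w0 n) * (w0 n) = w0 n := by rw [key]; simp
  have hw0 : (w0 n : Equiv.Perm (Fin n)) * (w0 n) = 1 := by
    ext x
    simp [w0, Fin.rev_rev]
  rwa [mul_assoc, hw0, mul_one] at this

lemma descent_or_ascent (w : Equiv.Perm (Fin n)) (i : Fin (n - 1)) :
    w (fLo i) < w (fHi i) ∨ w (fHi i) < w (fLo i) := by
  rcases lt_trichotomy (w (fLo i)) (w (fHi i)) with h | h | h
  · exact Or.inl h
  · exfalso
    have := w.injective h
    have := fLo_lt_fHi i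
    simp_all
  · exact Or.inr h

lemma invN_mul_sPerm_of_ascent {w : Equiv.Perm (Fin n)} {i : Fin (n - 1)}
    (h : w (fLo i) < w (fHi i)) : invN (w * sPerm i) = invN w + 1 := by
  obtain ⟨he, hni⟩ := key w i h
  rw [invN, he, Finset.card_insert_of_notMem hni,
    Finset.card_image_of_injective _ (Phi_inj i)]
  rfl

lemma invN_mul_sPerm_of_descent {w : Equiv.Perm (Fin n)} {i : Fin (n - 1)}
    (h : w (fHi i) < w (fLo i)) : invN (w * sPerm i) + 1 = invN w := by
  have h' : (w * sPerm i) (fLo i) < (w * sPerm i) (fHi i) := by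
    simpa [Equiv.Perm.mul_apply, sPerm_fLo, sPerm_fHi] using h
  have := invN_mul_sPerm_of_ascent h'
  rw [mul_assoc, sPerm_mul_self, mul_one] at this
  omega

lemma invSet_one : invSet (1 : Equiv.Perm (Fin n)) = ∅ := by
  ext p
  simp only [mem_invSet, Finset.notMem_empty, iff_false, not_and, Equiv.Perm.one_apply]
  intro h
  exact not_lt.2 (le_of_lt h)

lemma invN_eq_zero_iff {w : Equiv.Perm (Fin n)} : invN w = 0 ↔ w = 1 := by
  constructor
  · intro h
    apply eq_one_of_no_descent
    intro i
    rcases descent_or_ascent w i with h' | h'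
    · exact h'
    · exfalso
      have : (fLo i, fHi i) ∈ invSet w := mem_invSet.2 ⟨fLo_lt_fHi i, h'⟩
      rw [invN, Finset.card_eq_zero] at h
      simp [h] at this
  · rintro rfl
    rw [invN, invSet_one]; rfl

lemma exists_word (w : Equiv.Perm (Fin n)) : ∃ l : List (Fin (n - 1)), wordProd l = w := by
  generalize hk : invN w = k
  induction k using Nat.strong_induction_on generalizing w with
  | _ k ih =>
    rcases eq_or_ne w 1 with rfl | hw
    · exact ⟨[], rfl⟩
    · have : ∃ i, w (fHi i) < w (fLo i) := by
        by_contra hno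
        push_neg at hno
        apply hw
        apply eq_one_of_no_descent
        intro i
        rcases descent_or_ascent w i with h | h
        · exact h
        · exact absurd h (not_lt.2 (hno i))
      obtain ⟨i, hi⟩ := this
      have hlt := invN_mul_sPerm_of_descent hi
      obtain ⟨l, hl⟩ := ih (invN (w * sPerm i)) (by omega) (w * sPerm i) rfl
      refine ⟨l ++ [i], ?_⟩
      rw [wordProd_concat, hl, mul_assoc, sPerm_mul_self, mul_one]

lemma len_le {w : Equiv.Perm (Fin n)} {l : List (Fin (n - 1))} (h : wordProd l = w) :
    len w ≤ l.length :=
  Nat.sInf_le ⟨l, h, rfl⟩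

lemma exists_reduced (w : Equiv.Perm (Fin n)) :
    ∃ l : List (Fin (n - 1)), wordProd l = w ∧ l.length = len w := by
  obtain ⟨l, hl⟩ := exists_word w
  have hne : {k | ∃ l : List (Fin (n - 1)), wordProd l = w ∧ l.length = k}.Nonempty :=
    ⟨l.length, l, hl, rfl⟩
  obtain ⟨l', h1, h2⟩ := Nat.sInf_mem hne
  exact ⟨l', h1, h2⟩

lemma len_one : len (1 : Equiv.Perm (Fin n)) = 0 :=
  Nat.le_zero.1 (len_le wordProd_nil)

lemma invN_le_wordLength (l : List (Fin (n - 1))) : invN (wordProd l) ≤ l.length := by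
  induction l using List.reverseRecOn with
  | nil => simp [wordProd_nil, invN, invSet_one]
  | append_singleton l i ih =>
    rw [wordProd_concat]
    rcases descent_or_ascent (wordProd l) i with h | h
    · rw [invN_mul_sPerm_of_ascent h]
      simpa using Nat.add_le_add_right ih 1
    · have := invN_mul_sPerm_of_descent h
      simp only [List.length_append, List.length_singleton]
      omega

lemma invN_le_len (w : Equiv.Perm (Fin n)) : invN w ≤ len w := by
  obtain ⟨l, hl, hlen⟩ := exists_reduced w
  rw [← hlen, ← hl]
  exact invN_le_wordLength l

lemma len_le_invN (w : Equiv.Perm (Fin n)) : len w ≤ invN w := by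
  generalize hk : invN w = k
  induction k using Nat.strong_induction_on generalizing w with
  | _ k ih =>
    rcases eq_or_ne w 1 with rfl | hw
    · simp [len_one]
    · have : ∃ i, w (fHi i) < w (fLo i) := by
        by_contra hno
        push_neg at hno
        exact hw (eq_one_of_no_descent fun i =>
          (descent_or_ascent w i).resolve_right fun h => absurd h (not_lt.2 (hno i)))
      obtain ⟨i, hi⟩ := this
      have hlt := invN_mul_sPerm_of_descent hi
      have h1 : len (w * sPerm i) ≤ invN (w * sPerm i) := ih _ (by omega) _ rfl
      obtain ⟨l, hl, hlen⟩ := exists_reduced (w * sPerm i)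
      have : wordProd (l ++ [i]) = w := by
        rw [wordProd_concat, hl, mul_assoc, sPerm_mul_self, mul_one]
      have h2 := len_le this
      simp only [List.length_append, List.length_singleton] at h2
      omega

lemma len_eq_invN (w : Equiv.Perm (Fin n)) : len w = invN w :=
  le_antisymm (len_le_invN w) (invN_le_len w)

lemma len_mul_sPerm_of_ascent {w : Equiv.Perm (Fin n)} {i : Fin (n - 1)}
    (h : w (fLo i) < w (fHi i)) : len (w * sPerm i) = len w + 1 := by
  rw [len_eq_invN, len_eq_invN, invN_mul_sPerm_of_ascent h]

lemma len_mul_sPerm_of_descent {w : Equiv.Perm (Fin n)} {i : Fin (n - 1)}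
    (h : w (fHi i) < w (fLo i)) : len (w * sPerm i) + 1 = len w := by
  rw [len_eq_invN, len_eq_invN, invN_mul_sPerm_of_descent h]

lemma ascent_of_len_lt {w : Equiv.Perm (Fin n)} {i : Fin (n - 1)}
    (h : len w < len (w * sPerm i)) : w (fLo i) < w (fHi i) := by
  rcases descent_or_ascent w i with h' | h'
  · exact h'
  · have := len_mul_sPerm_of_descent h'
    omega

lemma descent_of_len_lt {w : Equiv.Perm (Fin n)} {i : Fin (n - 1)}
    (h : len (w * sPerm i) < len w) : w (fHi i) < w (fLo i) := by
  rcases descent_or_ascent w i with h' | h'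
  · have := len_mul_sPerm_of_ascent h'
    omega
  · exact h'

lemma len_eq_zero_iff {w : Equiv.Perm (Fin n)} : len w = 0 ↔ w = 1 := by
  rw [len_eq_invN, invN_eq_zero_iff]

/-- number of all sorted pairs -/
def NN (n : ℕ) : ℕ := (Finset.univ.filter (fun p : Fin n × Fin n => p.1 < p.2)).card

lemma invN_le_NN (w : Equiv.Perm (Fin n)) : invN w ≤ NN n := by
  apply Finset.card_le_card
  intro p hp
  rw [mem_invSet] at hp
  simp [hp.1]

lemma invSet_w0 : invSet (w0 n) = Finset.univ.filter (fun p : Fin n × Fin n => p.1 < p.2) := by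
  ext p
  rw [mem_invSet, Finset.mem_filter]
  simp only [Finset.mem_univ, true_and, w0, Fin.revPerm_apply, Fin.rev_lt_rev]
  tauto

lemma len_w0 : len (w0 n) = NN n := by
  rw [len_eq_invN, invN, invSet_w0]; rfl

lemma len_le_NN (w : Equiv.Perm (Fin n)) : len w ≤ NN n := by
  rw [len_eq_invN]; exact invN_le_NN w

end SchubAux

namespace SchubAux

variable {n : ℕ} {S : Equiv.Perm (Fin n) → MvPolynomial (Fin n ⊕ Fin n) ℤ}

lemma specS_X_inl (v : Equiv.Perm (Fin n)) (x : Fin n) :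
    specS v (X (Sum.inl x)) = X (v x) := by
  simp [specS]

lemma specS_X_inr (v : Equiv.Perm (Fin n)) (x : Fin n) :
    specS v (X (Sum.inr x)) = X x := by
  simp [specS]

lemma specS_rename (v : Equiv.Perm (Fin n)) (i : Fin (n - 1))
    (p : MvPolynomial (Fin n ⊕ Fin n) ℤ) :
    specS v (rename (Equiv.sumCongr (sPerm i) (Equiv.refl (Fin n))) p) =
      specS (v * sPerm i) p := by
  show aeval _ (rename _ p) = _
  rw [aeval_rename]
  have hf : (Sum.elim (fun j => X (v j)) X ∘ ⇑(Equiv.sumCongr (sPerm i) (Equiv.refl (Fin n)))) =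
      (Sum.elim (fun j => X ((v * sPerm i) j)) X : Fin n ⊕ Fin n → MvPolynomial (Fin n) ℤ) := by
    funext x
    cases x with
    | inl a => simp [Equiv.Perm.mul_apply]
    | inr a => simp
  rw [hf]
  rfl

lemma rename_invol (i : Fin (n - 1)) (p : MvPolynomial (Fin n ⊕ Fin n) ℤ) :
    rename (Equiv.sumCongr (sPerm i) (Equiv.refl (Fin n)))
      (rename (Equiv.sumCongr (sPerm i) (Equiv.refl (Fin n))) p) = p := by
  rw [rename_rename]
  have hcomp : (⇑(Equiv.sumCongr (sPerm i) (Equiv.refl (Fin n))) ∘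
      ⇑(Equiv.sumCongr (sPerm i) (Equiv.refl (Fin n)))) = id := by
    funext x
    cases x with
    | inl a => simp [sPerm_sPerm]
    | inr a => simp
  rw [hcomp, rename_id, AlgHom.id_apply]

lemma X_sub_X_ne_zero {σ : Type*} {a b : σ} (h : a ≠ b) :
    (X a - X b : MvPolynomial σ ℤ) ≠ 0 := by
  classical
  intro hc
  have hx : (X a : MvPolynomial σ ℤ) = X b := by linear_combination hc
  have h2 := congrArg (fun q => MvPolynomial.coeff (Finsupp.single a 1) q) hx
  simp only [coeff_X] at h2
  rw [if_pos trivial] at h2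
  split_ifs at h2 with hcond
  · have h3 := (Finsupp.single_left_injective (one_ne_zero (α := ℕ))) hcond
    first
    | exact h h3
    | exact h h3.symm
  · exact one_ne_zero h2

lemma inl_fLo_ne_inl_fHi (i : Fin (n - 1)) :
    (Sum.inl (fLo i) : Fin n ⊕ Fin n) ≠ Sum.inl (fHi i) := by
  intro hc
  have := Sum.inl.inj hc
  have := fLo_lt_fHi i
  simp_all

/-- symmetry of S w in x_i, x_{i+1} when i is an ascent of w -/
lemma symm_of_ascent (hS : SchubertFamily n S) {w : Equiv.Perm (Fin n)} {i : Fin (n - 1)}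
    (h : len w < len (w * sPerm i)) :
    rename (Equiv.sumCongr (sPerm i) (Equiv.refl (Fin n))) (S w) = S w := by
  set u := w * sPerm i with hu
  have husi : u * sPerm i = w := by rw [hu, mul_assoc, sPerm_mul_self, mul_one]
  have hdesc : len (u * sPerm i) < len u := by rw [husi]; exact h
  have hrec := hS.2 u i hdesc
  rw [husi] at hrec
  set ρ := rename (R := ℤ) (Equiv.sumCongr (sPerm i) (Equiv.refl (Fin n))) with hρ
  have happ := congrArg ρ hrec
  rw [map_mul, map_sub, map_sub] at happ
  rw [rename_X, rename_X] at happ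
  have hx1 : (Equiv.sumCongr (sPerm i) (Equiv.refl (Fin n))) (Sum.inl (fLo i)) =
      Sum.inl (fHi i) := by simp [sPerm_fLo]
  have hx2 : (Equiv.sumCongr (sPerm i) (Equiv.refl (Fin n))) (Sum.inl (fHi i)) =
      Sum.inl (fLo i) := by simp [sPerm_fHi]
  rw [hx1, hx2] at happ
  have hinv : ρ (ρ (S u)) = S u := rename_invol i (S u)
  rw [hinv] at happ
  -- happ : (X inl fHi - X inl fLo) * ρ (S w) = ρ (S u) - S u
  -- hrec : (X inl fLo - X inl fHi) * S w = S u - ρ (S u)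
  have key : (X (Sum.inl (fHi i)) - X (Sum.inl (fLo i)) : MvPolynomial (Fin n ⊕ Fin n) ℤ) *
      ρ (S w) = (X (Sum.inl (fHi i)) - X (Sum.inl (fLo i))) * S w := by
    rw [happ]
    linear_combination hrec
  have hne : (X (Sum.inl (fHi i)) - X (Sum.inl (fLo i)) : MvPolynomial (Fin n ⊕ Fin n) ℤ) ≠ 0 :=
    X_sub_X_ne_zero (Ne.symm (inl_fLo_ne_inl_fHi i))
  exact mul_left_cancel₀ hne key

/-- the fundamental specialized recursion -/
lemma spec_rec (hS : SchubertFamily n S) {w : Equiv.Perm (Fin n)} {i : Fin (n - 1)}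
    (h : len (w * sPerm i) < len w) (v : Equiv.Perm (Fin n)) :
    (X (v (fLo i)) - X (v (fHi i))) * specS v (S (w * sPerm i)) =
      specS v (S w) - specS (v * sPerm i) (S w) := by
  have := congrArg (specS v) (hS.2 w i h)
  rw [map_mul, map_sub, map_sub, specS_X_inl, specS_X_inl, specS_rename] at this
  exact this

/-- invariance of the specialization under right multiplication at an ascent -/
lemma spec_invariant (hS : SchubertFamily n S) {w : Equiv.Perm (Fin n)} {i : Fin (n - 1)}
    (h : len w < len (w * sPerm i)) (v : Equiv.Perm (Fin n)) :
    specS (v * sPerm i) (S w) = specS v (S w) := by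
  rw [← specS_rename, symm_of_ascent hS h]

lemma len_mul_sPerm_le (w : Equiv.Perm (Fin n)) (i : Fin (n - 1)) :
    len (w * sPerm i) ≤ len w + 1 := by
  rcases descent_or_ascent w i with h | h
  · rw [len_mul_sPerm_of_ascent h]
  · have := len_mul_sPerm_of_descent h
    omega

lemma exists_low {v : Equiv.Perm (Fin n)} (hv : v ≠ w0 n) :
    ∃ p : Fin n, p.val + (v p).val + 2 ≤ n := by
  by_contra hno
  push_neg at hno
  apply hv
  have hsum : ∑ p : Fin n, ((p : ℕ) + ((v p : Fin n) : ℕ)) = ∑ p : Fin n, (n - 1) := by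
    rw [Finset.sum_add_distrib]
    have h2 : ∑ p : Fin n, ((v p : Fin n) : ℕ) = ∑ p : Fin n, (p : ℕ) :=
      Equiv.sum_comp v (fun p => (p : ℕ))
    rw [h2]
    rcases n with _ | m
    · simp
    · rw [Finset.sum_const]
      rw [Fin.sum_univ_eq_sum_range (fun k => k)]
      have hg := Finset.sum_range_id_mul_two (m + 1)
      simp only [Finset.card_univ, Fintype.card_fin, smul_eq_mul]
      omega
  have hall : ∀ p : Fin n, (p : ℕ) + ((v p : Fin n) : ℕ) = n - 1 := by
    by_contra hex
    push_neg at hex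
    obtain ⟨p0, hp0⟩ := hex
    have hge : ∀ p : Fin n, (n - 1) ≤ (p : ℕ) + ((v p : Fin n) : ℕ) := by
      intro p
      have h1 := hno p
      have h2 := p.isLt
      omega
    have : ∑ p : Fin n, (n - 1) < ∑ p : Fin n, ((p : ℕ) + ((v p : Fin n) : ℕ)) := by
      apply Finset.sum_lt_sum (fun p _ => hge p)
      exact ⟨p0, Finset.mem_univ _, lt_of_le_of_ne (hge p0) (Ne.symm hp0)⟩
    omega
  ext p
  have := hall p
  have hlt := (v p).isLt
  have hplt := p.isLt
  simp only [w0, Fin.revPerm_apply, Fin.val_rev]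
  omega

/-- vanishing: the specialization is zero when `len v < len w` -/
lemma vanish (hS : SchubertFamily n S) (w v : Equiv.Perm (Fin n)) (hlt : len v < len w) :
    specS v (S w) = 0 := by
  generalize hk : NN n - len w = k
  induction k using Nat.strong_induction_on generalizing w v with
  | _ k ih =>
  by_cases hw : ∃ i, w (fLo i) < w (fHi i)
  · obtain ⟨i, hi⟩ := hw
    have hlen := len_mul_sPerm_of_ascent hi
    have hNN := len_le_NN (w * sPerm i)
    have husi : (w * sPerm i) * sPerm i = w := by rw [mul_assoc, sPerm_mul_self, mul_one]
    have hdesc : len ((w * sPerm i) * sPerm i) < len (w * sPerm i) := by rw [husi]; omega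
    have hrec := spec_rec hS hdesc v
    rw [husi] at hrec
    have h1 : specS v (S (w * sPerm i)) = 0 :=
      ih (NN n - len (w * sPerm i)) (by omega) _ _ (by omega) rfl
    have h2 : specS (v * sPerm i) (S (w * sPerm i)) = 0 := by
      apply ih (NN n - len (w * sPerm i)) (by omega) _ _ _ rfl
      have := len_mul_sPerm_le v i
      omega
    rw [h1, h2, sub_zero] at hrec
    have hne : (X (v (fLo i)) - X (v (fHi i)) : MvPolynomial (Fin n) ℤ) ≠ 0 := by
      apply X_sub_X_ne_zero
      intro hc
      have := v.injective hc
      have := fLo_lt_fHi i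
      simp_all
    rcases mul_eq_zero.1 hrec with hc | hc
    · exact absurd hc hne
    · exact hc
  · push_neg at hw
    have hw0 : w = w0 n := by
      apply eq_w0_of_no_ascent
      intro i
      exact (descent_or_ascent w i).resolve_left (fun h => absurd h (not_lt.2 (hw i)))
    subst hw0
    have hv : v ≠ w0 n := fun hc => by rw [hc] at hlt; exact absurd hlt (lt_irrefl _)
    obtain ⟨p0, hp0⟩ := exists_low hv
    rw [hS.1, map_prod]
    apply Finset.prod_eq_zero (i := (p0, v p0))
    · simp only [Finset.mem_filter, Finset.mem_univ, true_and]
      exact hp0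
    · rw [map_sub, specS_X_inl, specS_X_inr, sub_self]

/-- the product of the (specialized) positive roots over the inversion set -/
noncomputable def Eprod (w : Equiv.Perm (Fin n)) : MvPolynomial (Fin n) ℤ :=
  ∏ p ∈ invSet w, (X (w p.1) - X (w p.2))

lemma Eprod_mul_sPerm {w : Equiv.Perm (Fin n)} {i : Fin (n - 1)}
    (h : w (fLo i) < w (fHi i)) :
    Eprod (w * sPerm i) = (X (w (fHi i)) - X (w (fLo i))) * Eprod w := by
  obtain ⟨he, hni⟩ := key w i h
  rw [Eprod, he, Finset.prod_insert hni]
  congr 1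
  · simp [Equiv.Perm.mul_apply, sPerm_fLo, sPerm_fHi]
  · rw [Finset.prod_image (fun p _ q _ hpq => Phi_inj i hpq)]
    apply Finset.prod_congr rfl
    intro p _
    simp [Phi, Equiv.Perm.mul_apply, sPerm_sPerm]

/-- diagonal specialization: `𝔖_w(y_w; y)` equals the product of inversion roots -/
lemma diag (hS : SchubertFamily n S) (w : Equiv.Perm (Fin n)) :
    specS w (S w) = Eprod w := by
  generalize hk : NN n - len w = k
  induction k using Nat.strong_induction_on generalizing w with
  | _ k ih =>
  by_cases hw : ∃ i, w (fLo i) < w (fHi i)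
  · obtain ⟨i, hi⟩ := hw
    have hlen : len (w * sPerm i) = len w + 1 := len_mul_sPerm_of_ascent hi
    have hNN : len (w * sPerm i) ≤ NN n := len_le_NN _
    have husi : (w * sPerm i) * sPerm i = w := by rw [mul_assoc, sPerm_mul_self, mul_one]
    have hdesc : len ((w * sPerm i) * sPerm i) < len (w * sPerm i) := by rw [husi]; omega
    have hrec := spec_rec hS hdesc (w * sPerm i)
    rw [husi] at hrec
    -- hrec : (X ((w*s) fLo) - X ((w*s) fHi)) * specS (w*s) (S w)
    --          = specS (w*s) (S (w*s)) - specS ((w*s)*s) (S (w*s))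
    have h0 : specS w (S (w * sPerm i)) = 0 :=
      vanish hS (w * sPerm i) w (by omega)
    have h1 : specS (w * sPerm i) (S (w * sPerm i)) = Eprod (w * sPerm i) :=
      ih (NN n - len (w * sPerm i)) (by omega) _ rfl
    rw [h0, h1, sub_zero] at hrec
    have h2 : specS (w * sPerm i) (S w) = specS w (S w) :=
      spec_invariant hS (by omega) w
    rw [h2] at hrec
    have hulo : (w * sPerm i) (fLo i) = w (fHi i) := by
      simp [Equiv.Perm.mul_apply, sPerm_fLo]
    have huhi : (w * sPerm i) (fHi i) = w (fLo i) := by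
      simp [Equiv.Perm.mul_apply, sPerm_fHi]
    rw [hulo, huhi] at hrec
    rw [Eprod_mul_sPerm hi] at hrec
    have hne : (X (w (fHi i)) - X (w (fLo i)) : MvPolynomial (Fin n) ℤ) ≠ 0 := by
      apply X_sub_X_ne_zero
      intro hc
      have := w.injective hc
      have := fLo_lt_fHi i
      simp_all
    exact mul_left_cancel₀ hne hrec
  · push_neg at hw
    have hw0 : w = w0 n := by
      apply eq_w0_of_no_ascent
      intro i
      exact (descent_or_ascent w i).resolve_left (fun h => absurd h (not_lt.2 (hw i)))
    subst hw0
    rw [hS.1, map_prod, Eprod]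
    rw [invSet_w0]
    apply Finset.prod_nbij' (i := fun p : Fin n × Fin n => (p.1, (w0 n) p.2))
      (j := fun q : Fin n × Fin n => (q.1, (w0 n) q.2))
    · intro p hp
      simp only [Finset.mem_filter, Finset.mem_univ, true_and] at hp ⊢
      have h1 := p.1.isLt
      have h2 := p.2.isLt
      simp only [w0, Fin.revPerm_apply, Fin.lt_def, Fin.val_rev]
      omega
    · intro q hq
      simp only [Finset.mem_filter, Finset.mem_univ, true_and] at hq ⊢
      simp only [w0, Fin.revPerm_apply, Fin.lt_def, Fin.val_rev] at hq ⊢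
      have h1 := q.1.isLt
      have h2 := q.2.isLt
      omega
    · intro p _
      simp [w0, Fin.rev_rev]
    · intro q _
      simp [w0, Fin.rev_rev]
    · intro p _
      rw [map_sub, specS_X_inl, specS_X_inr]
      congr 2
      simp [w0, Fin.revPerm_apply, Fin.rev_rev]

end SchubAux

namespace SchubAux

variable {n : ℕ} {S : Equiv.Perm (Fin n) → MvPolynomial (Fin n ⊕ Fin n) ℤ}

/-- the target substitution z_k = y_{k+1} - y_k -/
noncomputable def Zfun : Fin (n - 1) → MvPolynomial (Fin n) ℤ :=
  fun k => X (fHi k) - X (fLo k)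

/-- the positive root y_{v(i+1)} - y_{v(i)} written in the z-variables, as an
ℕ-polynomial -/
noncomputable def zroot (v : Equiv.Perm (Fin n)) (i : Fin (n - 1)) :
    MvPolynomial (Fin (n - 1)) ℕ :=
  ∑ k ∈ Finset.univ.filter
      (fun k : Fin (n - 1) => (v (fLo i)).val ≤ k.val ∧ k.val < (v (fHi i)).val), X k

lemma telescope (a : ℕ) : ∀ (b : ℕ) (_ : a ≤ b) (hb : b < n),
    (∑ k ∈ Finset.univ.filter (fun k : Fin (n - 1) => a ≤ k.val ∧ k.val < b),
      ((X (fHi k) - X (fLo k)) : MvPolynomial (Fin n) ℤ))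
      = X (⟨b, hb⟩ : Fin n) - X (⟨a, by omega⟩ : Fin n) := by
  intro b
  induction b with
  | zero =>
    intro hab hb
    have ha : a = 0 := Nat.le_zero.1 hab
    subst ha
    rw [Finset.filter_false_of_mem (fun k _ => by omega)]
    simp
  | succ b ihb =>
    intro hab hb
    rcases Nat.lt_or_ge a (b + 1) with hlt | hge
    · have hab' : a ≤ b := by omega
      have hbn : b < n := by omega
      have hbn1 : b < n - 1 := by omega
      have hins : Finset.univ.filter (fun k : Fin (n - 1) => a ≤ k.val ∧ k.val < b + 1)
          = insert (⟨b, hbn1⟩ : Fin (n - 1))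
              (Finset.univ.filter (fun k : Fin (n - 1) => a ≤ k.val ∧ k.val < b)) := by
        ext k
        simp only [Finset.mem_insert, Finset.mem_filter, Finset.mem_univ, true_and, Fin.ext_iff]
        omega
      have hnm : (⟨b, hbn1⟩ : Fin (n - 1)) ∉
          Finset.univ.filter (fun k : Fin (n - 1) => a ≤ k.val ∧ k.val < b) := by
        simp
      rw [hins, Finset.sum_insert hnm, ihb hab' hbn]
      have e1 : fHi (⟨b, hbn1⟩ : Fin (n - 1)) = (⟨b + 1, hb⟩ : Fin n) := Fin.ext rfl
      have e2 : fLo (⟨b, hbn1⟩ : Fin (n - 1)) = (⟨b, hbn⟩ : Fin n) := Fin.ext rfl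
      rw [e1, e2]
      ring
    · have ha : a = b + 1 := by omega
      subst ha
      rw [Finset.filter_false_of_mem (fun k _ => by omega)]
      simp

lemma aeval_zroot {v : Equiv.Perm (Fin n)} {i : Fin (n - 1)}
    (hvi : v (fLo i) < v (fHi i)) :
    aeval Zfun (MvPolynomial.map (Nat.castRingHom ℤ) (zroot v i)) =
      X (v (fHi i)) - X (v (fLo i)) := by
  rw [zroot, map_sum, map_sum]
  have hsum : ∀ k : Fin (n - 1),
      aeval Zfun (MvPolynomial.map (Nat.castRingHom ℤ) (X k : MvPolynomial (Fin (n - 1)) ℕ)) =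
        ((X (fHi k) - X (fLo k)) : MvPolynomial (Fin n) ℤ) := by
    intro k
    rw [MvPolynomial.map_X, aeval_X]
    rfl
  rw [Finset.sum_congr rfl (fun k _ => hsum k)]
  have := telescope (n := n) (v (fLo i)).val (v (fHi i)).val (le_of_lt hvi) (v (fHi i)).isLt
  rw [this]

lemma eval_one_zroot {v : Equiv.Perm (Fin n)} {i : Fin (n - 1)}
    (hvi : v (fLo i) < v (fHi i)) :
    eval (fun _ => 1) (zroot v i) ≠ 0 := by
  rw [zroot, map_sum]
  have : ∀ k : Fin (n - 1), eval (fun _ => (1 : ℕ)) (X k : MvPolynomial (Fin (n - 1)) ℕ) = 1 :=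
    fun k => by simp
  rw [Finset.sum_congr rfl (fun k _ => this k), Finset.sum_const, smul_eq_mul, mul_one]
  have hhi := (v (fHi i)).isLt
  have hlt : (v (fLo i)).val < (v (fHi i)).val := hvi
  apply Finset.card_ne_zero_of_mem (a := (⟨(v (fLo i)).val, by omega⟩ : Fin (n - 1)))
  simp only [Finset.mem_filter, Finset.mem_univ, true_and]
  omega

/-- the Billey polynomial, by recursion on the reversed word -/
noncomputable def Brev : List (Fin (n - 1)) → Equiv.Perm (Fin n) → MvPolynomial (Fin (n - 1)) ℕ
  | [], w => if w = 1 then 1 else 0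
  | i :: t, w => Brev t w +
      (if len (w * sPerm i) < len w then zroot (wordProd t.reverse) i * Brev t (w * sPerm i)
       else 0)

lemma reduced_step {r : List (Fin (n - 1))} {i : Fin (n - 1)}
    (h : len (wordProd ((i :: r).reverse)) = (i :: r).length) :
    len (wordProd r.reverse) = r.length ∧
      wordProd ((i :: r).reverse) = wordProd r.reverse * sPerm i := by
  have hv : wordProd ((i :: r).reverse) = wordProd r.reverse * sPerm i := by
    rw [List.reverse_cons, wordProd_concat]
  constructor
  · have h1 : len (wordProd r.reverse) ≤ r.length := by
      have := len_le (w := wordProd r.reverse) (l := r.reverse) rfl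
      simpa using this
    have h2 : len (wordProd r.reverse * sPerm i) ≤ len (wordProd r.reverse) + 1 :=
      len_mul_sPerm_le _ _
    rw [hv] at h
    simp only [List.length_cons] at h
    omega
  · exact hv

/-- Billey's formula -/
lemma billey (hS : SchubertFamily n S) :
    ∀ (r : List (Fin (n - 1))), len (wordProd r.reverse) = r.length →
    ∀ w, aeval Zfun (MvPolynomial.map (Nat.castRingHom ℤ) (Brev r w)) =
      specS (wordProd r.reverse) (S w) := by
  intro r
  induction r with
  | nil =>
    intro _ w
    have hword : wordProd (([] : List (Fin (n - 1))).reverse) = 1 := rfl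
    rw [hword, Brev]
    by_cases hw : w = 1
    · subst hw
      rw [if_pos rfl]
      have h1 : specS (1 : Equiv.Perm (Fin n)) (S 1) = Eprod 1 := diag hS 1
      rw [h1, Eprod, invSet_one, Finset.prod_empty]
      simp
    · rw [if_neg hw]
      have hlen : 0 < len w := by
        rcases Nat.eq_zero_or_pos (len w) with h0 | h0
        · exact absurd (len_eq_zero_iff.1 h0) hw
        · exact h0
      have := vanish hS w 1 (by rw [len_one]; omega)
      rw [this]
      simp
  | cons i r ih =>
    intro hred w
    obtain ⟨hred', hv⟩ := reduced_step hred
    have hlenv : len (wordProd r.reverse * sPerm i) = r.length + 1 := by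
      rw [← hv, hred]; rfl
    have hasc : len (wordProd r.reverse) < len (wordProd r.reverse * sPerm i) := by
      omega
    have hvasc : (wordProd r.reverse) (fLo i) < (wordProd r.reverse) (fHi i) :=
      ascent_of_len_lt hasc
    rw [hv, Brev]
    by_cases hdesc : len (w * sPerm i) < len w
    · rw [if_pos hdesc]
      rw [map_add, map_add, map_mul, map_mul, ih hred' w, ih hred' (w * sPerm i),
        aeval_zroot hvasc]
      -- goal : specS v' (S w) + (X (v' fHi) - X (v' fLo)) * specS v' (S (w * s))
      --        = specS (v' * s) (S w)
      have hrec := spec_rec hS hdesc (wordProd r.reverse * sPerm i)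
      have hsi : (wordProd r.reverse * sPerm i) * sPerm i = wordProd r.reverse := by
        rw [mul_assoc, sPerm_mul_self, mul_one]
      rw [hsi] at hrec
      have e1 : (wordProd r.reverse * sPerm i) (fLo i) = (wordProd r.reverse) (fHi i) := by
        simp [Equiv.Perm.mul_apply, sPerm_fLo]
      have e2 : (wordProd r.reverse * sPerm i) (fHi i) = (wordProd r.reverse) (fLo i) := by
        simp [Equiv.Perm.mul_apply, sPerm_fHi]
      rw [e1, e2] at hrec
      have hwm : len (w * sPerm i) < len ((w * sPerm i) * sPerm i) := by
        rw [mul_assoc, sPerm_mul_self, mul_one]; exact hdesc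
      have hinv : specS (wordProd r.reverse * sPerm i) (S (w * sPerm i)) =
          specS (wordProd r.reverse) (S (w * sPerm i)) :=
        spec_invariant hS hwm (wordProd r.reverse)
      rw [hinv] at hrec
      linear_combination hrec
    · rw [if_neg hdesc]
      rw [map_add, map_add, ih hred' w]
      have hasc' : len w < len (w * sPerm i) := by
        rcases descent_or_ascent w i with h | h
        · have := len_mul_sPerm_of_ascent h; omega
        · have := len_mul_sPerm_of_descent h; omega
      rw [spec_invariant hS hasc' (wordProd r.reverse)]
      simp

/-- nonvanishing of the Billey polynomial along a reduced subword -/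
lemma brev_ne_zero :
    ∀ (r : List (Fin (n - 1))), len (wordProd r.reverse) = r.length →
    ∀ (w : Equiv.Perm (Fin n)) (m : List (Fin (n - 1))), m.Sublist r →
      wordProd m.reverse = w → len w = m.length →
      eval (fun _ => 1) (Brev r w) ≠ 0 := by
  intro r
  induction r with
  | nil =>
    intro _ w m hsub hword hlen
    have hm : m = [] := List.sublist_nil.1 hsub
    subst hm
    have hw : w = 1 := by rw [← hword]; rfl
    subst hw
    rw [Brev, if_pos rfl]
    simp
  | cons i r ih =>
    intro hred w m hsub hword hlen
    obtain ⟨hred', hv⟩ := reduced_step hred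
    have hlenv : len (wordProd r.reverse * sPerm i) = r.length + 1 := by
      rw [← hv, hred]; rfl
    have hvasc : (wordProd r.reverse) (fLo i) < (wordProd r.reverse) (fHi i) :=
      ascent_of_len_lt (by omega)
    rw [Brev, eval_add]
    rw [List.sublist_cons_iff] at hsub
    rcases hsub with hsub | ⟨m', rfl, hsub'⟩
    · have h1 := ih hred' w m hsub hword hlen
      intro hc
      rw [Nat.add_eq_zero] at hc
      exact h1 hc.1
    · -- m = i :: m', w = wordProd m'.reverse * sPerm i
      have hw : w = wordProd m'.reverse * sPerm i := by
        rw [← hword, List.reverse_cons, wordProd_concat]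
      have hlw' : len (wordProd m'.reverse) = m'.length := by
        have h1 : len (wordProd m'.reverse) ≤ m'.length := by
          have := len_le (w := wordProd m'.reverse) (l := m'.reverse) rfl
          simpa using this
        have h2 : len (wordProd m'.reverse * sPerm i) ≤ len (wordProd m'.reverse) + 1 :=
          len_mul_sPerm_le _ _
        rw [← hw] at h2
        simp only [List.length_cons] at hlen
        omega
      have hws : w * sPerm i = wordProd m'.reverse := by
        rw [hw, mul_assoc, sPerm_mul_self, mul_one]
      have hdesc : len (w * sPerm i) < len w := by
        rw [hws, hlw']
        simp only [List.length_cons] at hlen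
        omega
      rw [if_pos hdesc, eval_mul]
      have h1 := ih hred' (w * sPerm i) m' hsub' (by rw [hws]) (by rw [hws, hlw'])
      have h2 := eval_one_zroot hvasc
      intro hc
      rw [Nat.add_eq_zero] at hc
      exact (Nat.mul_ne_zero h2 h1) hc.2

end SchubAux

/-- **Positivity of specialized Schubert polynomials** (Buch-Rimányi): for
`w ≤ v` in Bruhat order, `𝔖_w(y_v; y)` is a nonzero polynomial with
nonnegative integer coefficients in the variables `z_i = y_{i+1} - y_i`. -/
theorem schubert_specialization_positive (n : ℕ) (hn : 1 ≤ n) (v w : Equiv.Perm (Fin n))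
    (hvw : bruhatLE w v)
    (S : Equiv.Perm (Fin n) → MvPolynomial (Fin n ⊕ Fin n) ℤ) (hS : SchubertFamily n S) :
    ∃ Q : MvPolynomial (Fin (n - 1)) ℤ,
      (∀ d, 0 ≤ Q.coeff d) ∧ Q ≠ 0 ∧
      aeval (fun i : Fin (n - 1) => (X (fHi i) - X (fLo i) : MvPolynomial (Fin n) ℤ)) Q =
        specS v (S w) := by
  obtain ⟨l, l', hl, hsub, hl'⟩ := hvw
  have hred : len (wordProd l.reverse.reverse) = l.reverse.length := by
    rw [List.reverse_reverse, hl.1, List.length_reverse]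
    exact hl.2.symm
  refine ⟨MvPolynomial.map (Nat.castRingHom ℤ) (SchubAux.Brev l.reverse w), ?_, ?_, ?_⟩
  · intro d
    rw [MvPolynomial.coeff_map]
    exact Int.natCast_nonneg _
  · intro hc
    have hB : SchubAux.Brev l.reverse w = 0 := by
      apply MvPolynomial.map_injective (Nat.castRingHom ℤ) Nat.cast_injective
      rw [hc]
      simp
    have hnz := SchubAux.brev_ne_zero l.reverse hred w l'.reverse hsub.reverse
      (by rw [List.reverse_reverse]; exact hl'.1)
      (by rw [List.length_reverse]; exact hl'.2.symm)
    apply hnz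
    rw [hB]
    simp
  · have hb := SchubAux.billey hS l.reverse hred w
    rw [List.reverse_reverse, hl.1] at hb
    exact hb
end

section
/- In H_n ⊗_ℤ R, the elements h_i(c) = 1 + (1−c)s_i satisfy the Yang–Baxter identities: (a) h_i(c) h_j(d) = h_j(d) h_i(c) whenever |i−j| ≥ 2; (b) h_i(c) h_i(d) = h_i(cd); (c) h_i(c) h_{i+1}(cd) h_i(d) = h_{i+1}(d) h_i(cd) h_{i+1}(c), for all c, d ∈ R and all valid indices 1 ≤ i, j ≤ n−1. -/
set_option maxHeartbeats 1000000
set_option synthInstance.maxHeartbeats 400000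

open MvPolynomial

/-- The multiplicative set of monomials in a multivariate polynomial ring over `ℤ`. -/
noncomputable def varMon (σ : Type) : Submonoid (MvPolynomial σ ℤ) :=
  Submonoid.closure (Set.range MvPolynomial.X)

/-- The ring of Laurent polynomials over `ℤ` in variables indexed by `σ`,
realized as the localization of `MvPolynomial σ ℤ` at the monomials. -/
abbrev LaurentMv (σ : Type) := Localization (varMon σ)

/-- The variable `X s` as a Laurent polynomial. -/
noncomputable def Xu {σ : Type} (s : σ) : LaurentMv σ :=
  algebraMap (MvPolynomial σ ℤ) (LaurentMv σ) (MvPolynomial.X s)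

/-- The inverse `(X s)⁻¹` of a variable, as a Laurent polynomial. -/
noncomputable def XuInv {σ : Type} (s : σ) : LaurentMv σ :=
  Localization.mk 1 ⟨MvPolynomial.X s, Submonoid.subset_closure ⟨s, rfl⟩⟩

theorem isUnit_Xu {σ : Type} (s : σ) : IsUnit (Xu s) :=
  IsLocalization.map_units (M := varMon σ) (LaurentMv σ)
    ⟨MvPolynomial.X s, Submonoid.subset_closure ⟨s, rfl⟩⟩

/-- Substitution of units for the variables, as a ring homomorphism on
Laurent polynomial rings. -/
noncomputable def substLaurent {σ τ : Type} (f : σ → LaurentMv τ)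
    (hf : ∀ s, IsUnit (f s)) : LaurentMv σ →+* LaurentMv τ :=
  IsLocalization.lift (M := varMon σ) (g := (MvPolynomial.aeval f).toRingHom)
    (by
      rintro ⟨y, hy⟩
      induction hy using Submonoid.closure_induction with
      | mem x hx =>
          obtain ⟨s, rfl⟩ := hx
          simpa using hf s
      | one => simp
      | mul x y _ _ hx hy => simpa [map_mul] using hx.mul hy)

/-- The abbreviation `R n` for the coefficient ring `ℤ[a_i^{±1}, b_i^{±1}]`:
`a`-variables indexed by `Sum.inl`, `b`-variables by `Sum.inr`. -/
abbrev Rng (n : ℕ) := LaurentMv (Fin n ⊕ Fin n)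

/-- The defining relations of the degenerate Hecke algebra with `m` generators
over the Laurent polynomial ring `R n`; generator `i : Fin m` stands for
`s_{i+1}` (1-based). -/
inductive HRelR (n m : ℕ) :
    FreeAlgebra (Rng n) (Fin m) → FreeAlgebra (Rng n) (Fin m) → Prop
  | comm (i j : Fin m) (h : (i : ℕ) + 2 ≤ j ∨ (j : ℕ) + 2 ≤ i) :
      HRelR n m (FreeAlgebra.ι _ i * FreeAlgebra.ι _ j)
        (FreeAlgebra.ι _ j * FreeAlgebra.ι _ i)
  | braid (i j : Fin m) (h : (j : ℕ) = i + 1) :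
      HRelR n m (FreeAlgebra.ι _ i * FreeAlgebra.ι _ j * FreeAlgebra.ι _ i)
        (FreeAlgebra.ι _ j * FreeAlgebra.ι _ i * FreeAlgebra.ι _ j)
  | sq (i : Fin m) :
      HRelR n m (FreeAlgebra.ι _ i * FreeAlgebra.ι _ i) (-(FreeAlgebra.ι _ i))

/-- The degenerate Hecke algebra `H_{m+1} ⊗ R n`, presented as the quotient of
the free `R n`-algebra on `m` generators by the Hecke relations.
`H_n ⊗ R` itself is `HA n (n-1)`. -/
abbrev HA (n m : ℕ) := RingQuot (HRelR n m)

noncomputable instance instHARing (n m : ℕ) : Ring (HA n m) := by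
  with_unfolding_all exact RingQuot.instRing (R := FreeAlgebra (Rng n) (Fin m)) (HRelR n m)

/-- The generator `s_i` of `HA n m` for a 1-based index `i : ℕ`; junk value `0`
out of range. -/
noncomputable def sgenA {n m : ℕ} (i : ℕ) : HA n m :=
  if h : 1 ≤ i ∧ i ≤ m then
    RingQuot.mkAlgHom (Rng n) (HRelR n m) (FreeAlgebra.ι _ (⟨i - 1, by omega⟩ : Fin m))
  else 0

/-- The Yang-Baxter element `h_i(c) = 1 + (1-c) s_i` of `HA n m` (1-based `i`). -/
noncomputable def hh {n m : ℕ} (i : ℕ) (c : Rng n) : HA n m :=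
  1 + algebraMap (Rng n) (HA n m) (1 - c) * sgenA i

/-- `A_p^q(c;k) = h_{k-1+p}(d_p/c) h_{k-2+p}(d_{p-1}/c) ⋯ h_{k-1+q}(d_q/c)`,
where `d : ℕ → Rng n` is the (1-based) list of `b`-variables used and `c` is a
unit; for `p = q - 1` this is `1`. -/
noncomputable def AA {n m : ℕ} (p q : ℕ) (c : (Rng n)ˣ) (k : ℕ)
    (d : ℕ → Rng n) : HA n m :=
  (((List.range' q (p + 1 - q)).reverse).map fun r =>
    hh (k - 1 + r) (d r * ((c⁻¹ : (Rng n)ˣ) : Rng n))).prod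

/-- The `b`-variable `b_r` (1-based) of `Rng n`, as a unit; junk value `1` out
of range. -/
noncomputable def bu (n : ℕ) (r : ℕ) : (Rng n)ˣ :=
  if h : 1 ≤ r ∧ r ≤ n then (isUnit_Xu (Sum.inr (⟨r - 1, by omega⟩ : Fin n))).unit else 1

/-- The `a`-variable `a_r` (1-based) of `Rng n`, as a unit; junk value `1` out
of range. -/
noncomputable def au (n : ℕ) (r : ℕ) : (Rng n)ˣ :=
  if h : 1 ≤ r ∧ r ≤ n then (isUnit_Xu (Sum.inl (⟨r - 1, by omega⟩ : Fin n))).unit else 1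

/-- Fomin-Kirillov's element `𝔊^{(m)}(c;d) = A_{m-1}^1(c_1;1) ⋯ A_1^1(c_{m-1};m-1)`,
for 1-based variable lists `c` (units) and `d`, formed in `HA n (m-1)`. -/
noncomputable def Gfk {n : ℕ} (m : ℕ) (c : ℕ → (Rng n)ˣ) (d : ℕ → Rng n) :
    HA n (m - 1) :=
  ((List.range' 1 (m - 1)).map fun k => AA (m - k) 1 (c k) k d).prod

/-- The list of `b`-variables of `Rng n` (1-based). -/
noncomputable def bval (n : ℕ) : ℕ → Rng n := fun r => ((bu n r : (Rng n)ˣ) : Rng n)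

/-! The identities hold for `h(c) = 1 + (1 - c) s` in any algebra as soon as the `s` involved
satisfy the Hecke relations `s² = -s`, far commutation and the braid relation: `h(c) h(d)` is
linear in `s` by `s² = -s`, and after expanding both sides of the braid identity with
`s² = -s` they agree term by term modulo `sts = tst`. -/

section YangBaxterElement

variable {R A : Type*} [CommRing R] [Ring A] [Algebra R A]

def ybElem (s : A) (c : R) : A :=
  1 + algebraMap R A (1 - c) * s

theorem ybElem_mul_ybElem {s : A} (hs : s * s = -s) (c d : R) :
    ybElem s c * ybElem s d = ybElem s (c * d) := by
  simp only [ybElem, ← Algebra.smul_def, mul_add, add_mul, one_mul, mul_one, smul_mul_assoc,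
    mul_smul_comm, hs, smul_neg]
  module

theorem Commute.ybElem {s t : A} (h : Commute s t) (c d : R) :
    Commute (ybElem s c) (ybElem t d) := by
  simp only [Commute, SemiconjBy, _root_.ybElem, ← Algebra.smul_def, mul_add, add_mul, one_mul,
    mul_one, smul_mul_assoc, mul_smul_comm, h.eq]
  module

theorem ybElem_braid {s t : A} (hs : s * s = -s) (ht : t * t = -t)
    (hst : s * t * s = t * s * t) (c d : R) :
    ybElem s c * ybElem t (c * d) * ybElem s d = ybElem t d * ybElem s (c * d) * ybElem t c := by
  have hst' : s * (t * s) = t * (s * t) := by simpa only [mul_assoc] using hst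
  simp only [ybElem, ← Algebra.smul_def, mul_add, add_mul, one_mul, mul_one, mul_assoc,
    smul_mul_assoc, mul_smul_comm, hs, ht, smul_neg, hst']
  module

end YangBaxterElement

section HeckeGenerators

variable {n m : ℕ}

theorem hh_eq_ybElem (i : ℕ) (c : Rng n) : (hh i c : HA n m) = ybElem (sgenA i) c := rfl

theorem sgenA_mul_self {i : ℕ} (hi₁ : 1 ≤ i) (hi₂ : i ≤ m) :
    (sgenA i : HA n m) * sgenA i = -sgenA i := by
  rw [sgenA, dif_pos ⟨hi₁, hi₂⟩, ← map_mul, ← map_neg]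
  exact RingQuot.mkAlgHom_rel _ (HRelR.sq _)

theorem commute_sgenA {i j : ℕ} (hi₁ : 1 ≤ i) (hi₂ : i ≤ m) (hj₁ : 1 ≤ j) (hj₂ : j ≤ m)
    (hij : i + 2 ≤ j ∨ j + 2 ≤ i) :
    Commute (sgenA i : HA n m) (sgenA j) := by
  rw [Commute, SemiconjBy, sgenA, sgenA, dif_pos ⟨hi₁, hi₂⟩, dif_pos ⟨hj₁, hj₂⟩, ← map_mul,
    ← map_mul]
  exact RingQuot.mkAlgHom_rel _ (HRelR.comm _ _ (by dsimp only; omega))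

theorem sgenA_braid {i : ℕ} (hi₁ : 1 ≤ i) (hi₂ : i + 1 ≤ m) :
    (sgenA i : HA n m) * sgenA (i + 1) * sgenA i = sgenA (i + 1) * sgenA i * sgenA (i + 1) := by
  rw [sgenA, sgenA, dif_pos ⟨hi₁, by omega⟩, dif_pos ⟨by omega, hi₂⟩, ← map_mul, ← map_mul,
    ← map_mul, ← map_mul]
  exact RingQuot.mkAlgHom_rel _ (HRelR.braid _ _ (by dsimp only; omega))

end HeckeGenerators

theorem yang_baxter_general (n : ℕ) (c d : Rng n) :
    (∀ i j : ℕ, 1 ≤ i → i ≤ n - 1 → 1 ≤ j → j ≤ n - 1 → (i + 2 ≤ j ∨ j + 2 ≤ i) →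
        (hh i c : HA n (n - 1)) * hh j d = hh j d * hh i c) ∧
    (∀ i : ℕ, 1 ≤ i → i ≤ n - 1 →
        (hh i c : HA n (n - 1)) * hh i d = hh i (c * d)) ∧
    (∀ i : ℕ, 1 ≤ i → i + 1 ≤ n - 1 →
        (hh i c : HA n (n - 1)) * hh (i + 1) (c * d) * hh i d =
          hh (i + 1) d * hh i (c * d) * hh (i + 1) c) := by
  simp only [hh_eq_ybElem]
  refine ⟨fun i j hi₁ hi₂ hj₁ hj₂ hij => ?_, fun i hi₁ hi₂ => ?_, fun i hi₁ hi₂ => ?_⟩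
  · exact (commute_sgenA hi₁ hi₂ hj₁ hj₂ hij).ybElem c d
  · exact ybElem_mul_ybElem (sgenA_mul_self hi₁ hi₂) c d
  · exact ybElem_braid (sgenA_mul_self hi₁ (by omega)) (sgenA_mul_self (by omega) hi₂)
      (sgenA_braid hi₁ hi₂) c d

/-- **The Yang-Baxter identities** (Fomin-Kirillov) in `H_n ⊗ R` for the
elements `h_i(c) = 1 + (1-c) s_i`. -/
theorem yang_baxter (n : ℕ) (hn : 1 ≤ n) (c d : Rng n) :
    (∀ i j : ℕ, 1 ≤ i → i ≤ n - 1 → 1 ≤ j → j ≤ n - 1 → (i + 2 ≤ j ∨ j + 2 ≤ i) →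
        (hh i c : HA n (n - 1)) * hh j d = hh j d * hh i c) ∧
    (∀ i : ℕ, 1 ≤ i → i ≤ n - 1 →
        (hh i c : HA n (n - 1)) * hh i d = hh i (c * d)) ∧
    (∀ i : ℕ, 1 ≤ i → i + 1 ≤ n - 1 →
        (hh i c : HA n (n - 1)) * hh (i + 1) (c * d) * hh i d =
          hh (i + 1) d * hh i (c * d) * hh (i + 1) c) :=
  yang_baxter_general n c d
end

section
/- In H_n ⊗_ℤ R, for all integers p ≥ q ≥ 1 and k ≥ 2 with k−1+p ≤ n−1, and all units c, d of R: A_p^q(c; k−1) · A_{p−1}^q(d; k) · h_{q+k−2}(c/d) = A_p^q(d; k−1) · A_{p−1}^q(c; k). -/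
set_option maxHeartbeats 1000000
set_option synthInstance.maxHeartbeats 400000

open MvPolynomial

section AuxLemmas

variable {n m : ℕ}

private lemma yb_abstract {R A : Type*} [CommRing R] [Ring A] [Algebra R A] (s t : A)
    (hs : s * s = -s) (ht : t * t = -t) (hb : s * t * s = t * s * t) (x y : R) :
    (1 + (1 - x) • s) * (1 + (1 - x * y) • t) * (1 + (1 - y) • s) =
      (1 + (1 - y) • t) * (1 + (1 - x * y) • s) * (1 + (1 - x) • t) := by
  simp only [mul_add, add_mul, mul_one, one_mul, smul_mul_assoc, mul_smul_comm, smul_smul,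
    hs, ht, hb]
  module

private lemma hmul_abstract {R A : Type*} [CommRing R] [Ring A] [Algebra R A] (s : A)
    (hs : s * s = -s) (x y : R) :
    (1 + (1 - x) • s) * (1 + (1 - y) • s) = 1 + (1 - x * y) • s := by
  simp only [mul_add, add_mul, mul_one, one_mul, smul_mul_assoc, mul_smul_comm, smul_smul, hs]
  module

lemma sgen_sq (i : ℕ) : (sgenA i : HA n m) * sgenA i = -sgenA i := by
  unfold sgenA
  by_cases h : 1 ≤ i ∧ i ≤ m
  · rw [dif_pos h, ← map_mul, ← map_neg]
    exact RingQuot.mkAlgHom_rel _ (HRelR.sq _)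
  · rw [dif_neg h]; simp

lemma sgen_comm {i j : ℕ} (h : i + 2 ≤ j) :
    (sgenA i : HA n m) * sgenA j = sgenA j * sgenA i := by
  unfold sgenA
  by_cases hi : 1 ≤ i ∧ i ≤ m
  · by_cases hj : 1 ≤ j ∧ j ≤ m
    · rw [dif_pos hi, dif_pos hj, ← map_mul, ← map_mul]
      exact RingQuot.mkAlgHom_rel _ (HRelR.comm _ _ (Or.inl (by simp; omega)))
    · rw [dif_neg hj]; simp
  · rw [dif_neg hi]; simp

lemma sgen_braid {i : ℕ} (h1 : 1 ≤ i) (h2 : i + 1 ≤ m) :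
    (sgenA i : HA n m) * sgenA (i + 1) * sgenA i =
      sgenA (i + 1) * sgenA i * sgenA (i + 1) := by
  unfold sgenA
  rw [dif_pos ⟨h1, by omega⟩, dif_pos ⟨by omega, h2⟩, ← map_mul, ← map_mul, ← map_mul, ← map_mul]
  exact RingQuot.mkAlgHom_rel _ (HRelR.braid ⟨i - 1, by omega⟩ ⟨i + 1 - 1, by omega⟩
    (by simp; omega))

lemma hh_eq (i : ℕ) (c : Rng n) : (hh i c : HA n m) = 1 + (1 - c) • sgenA i := by
  rw [hh]; exact congrArg (1 + ·) (Algebra.smul_def _ _).symm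

lemma hh_mul (i : ℕ) (x y : Rng n) :
    (hh i x : HA n m) * hh i y = hh i (x * y) := by
  rw [hh_eq, hh_eq, hh_eq]
  exact hmul_abstract _ (sgen_sq i) x y

lemma hh_commute {i j : ℕ} (h : (sgenA i : HA n m) * sgenA j = sgenA j * sgenA i)
    (x y : Rng n) : Commute (hh i x : HA n m) (hh j y) := by
  have h' : Commute (sgenA i : HA n m) (sgenA j) := h
  rw [hh_eq, hh_eq]
  exact (Commute.one_left _).add_left
    ((Commute.one_right _).add_right (by
      rw [show ((1 - x) • sgenA i : HA n m) = algebraMap (Rng n) (HA n m) (1 - x) * sgenA i from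
          add_left_cancel ((hh_eq (m := m) i x).symm :
            (1 : HA n m) + (1 - x) • sgenA i = 1 + algebraMap (Rng n) (HA n m) (1 - x) * sgenA i),
        show ((1 - y) • sgenA j : HA n m) = algebraMap (Rng n) (HA n m) (1 - y) * sgenA j from
          add_left_cancel ((hh_eq (m := m) j y).symm :
            (1 : HA n m) + (1 - y) • sgenA j = 1 + algebraMap (Rng n) (HA n m) (1 - y) * sgenA j)]
      exact ((Algebra.commute_algebraMap_left _ _).mul_left
        ((Algebra.commute_algebraMap_right _ _).mul_right h'))))

set_option maxHeartbeats 2000000 in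
lemma hh_braid {i : ℕ} (h1 : 1 ≤ i) (h2 : i + 1 ≤ m) (x y : Rng n) :
    (hh i x : HA n m) * hh (i + 1) (x * y) * hh i y =
      hh (i + 1) y * hh i (x * y) * hh (i + 1) x := by
  rw [hh_eq i x, hh_eq (i + 1) (x * y), hh_eq i y, hh_eq (i + 1) y, hh_eq i (x * y),
    hh_eq (i + 1) x]
  exact yb_abstract (R := Rng n) (A := HA n m) (sgenA i) (sgenA (i+1)) (sgen_sq i) (sgen_sq (i + 1)) (sgen_braid h1 h2) x y

lemma hh_AA_commute {j p q k : ℕ} (h : ∀ r, q ≤ r → r ≤ p → j + 2 ≤ k - 1 + r)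
    (x : Rng n) (c : (Rng n)ˣ) (d : ℕ → Rng n) :
    Commute (hh j x : HA n m) (AA p q c k d) := by
  unfold AA
  apply Commute.list_prod_right
  intro z hz
  simp only [List.mem_map, List.mem_reverse, List.mem_range'_1] at hz
  obtain ⟨r, hr, rfl⟩ := hz
  exact hh_commute (sgen_comm (h r hr.1 (by omega))) _ _

lemma AA_nil {p q : ℕ} (h : p + 1 ≤ q) (c : (Rng n)ˣ) (k : ℕ) (d : ℕ → Rng n) :
    (AA p q c k d : HA n m) = 1 := by
  unfold AA
  rw [Nat.sub_eq_zero_of_le h]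
  simp

lemma AA_top {p q : ℕ} (hq : 1 ≤ q) (hqp : q ≤ p) (c : (Rng n)ˣ) (k : ℕ) (d : ℕ → Rng n) :
    (AA p q c k d : HA n m) =
      hh (k - 1 + p) (d p * ((c⁻¹ : (Rng n)ˣ) : Rng n)) * AA (p - 1) q c k d := by
  unfold AA
  have h1 : p + 1 - q = (p - q) + 1 := by omega
  have h2 : p - 1 + 1 - q = p - q := by omega
  have h3 : q + 1 * (p - q) = p := by omega
  rw [h1, h2, List.range'_concat, List.reverse_append, h3]
  simp

lemma AA_bot {p q : ℕ} (hqp : q ≤ p) (c : (Rng n)ˣ) (k : ℕ) (d : ℕ → Rng n) :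
    (AA p q c k d : HA n m) =
      AA p (q + 1) c k d * hh (k - 1 + q) (d q * ((c⁻¹ : (Rng n)ˣ) : Rng n)) := by
  unfold AA
  have h1 : p + 1 - q = (p - q) + 1 := by omega
  have h2 : p + 1 - (q + 1) = p - q := by omega
  rw [h1, h2, List.range'_succ, List.reverse_cons, List.map_append, List.prod_append]
  simp

end AuxLemmas

/-- **The exchange identity for the elements `A_p^q(c;k)`** (Buch-Rimányi):
`A_p^q(c;k-1) A_{p-1}^q(d;k) h_{q+k-2}(c/d) = A_p^q(d;k-1) A_{p-1}^q(c;k)`. -/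
theorem A_exchange (n : ℕ) (p q k : ℕ) (hq : 1 ≤ q) (hqp : q ≤ p) (hk : 2 ≤ k)
    (hpk : k - 1 + p ≤ n - 1) (c d : (Rng n)ˣ) :
    (AA p q c (k - 1) (bval n) : HA n (n - 1)) * AA (p - 1) q d k (bval n) *
        hh (q + k - 2) ((c : Rng n) * ((d⁻¹ : (Rng n)ˣ) : Rng n)) =
      AA p q d (k - 1) (bval n) * AA (p - 1) q c k (bval n) := by
  obtain ⟨t, rfl⟩ : ∃ t, p = q + t := ⟨p - q, by omega⟩
  clear hqp
  revert hq hpk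
  induction t generalizing q c d with
  | zero =>
    intro hq hpk
    simp only [Nat.add_zero]
    rw [AA_nil (by omega : q - 1 + 1 ≤ q) d k, AA_nil (by omega : q - 1 + 1 ≤ q) c k,
      AA_top hq le_rfl c (k - 1), AA_nil (by omega : q - 1 + 1 ≤ q) c (k - 1),
      AA_top hq le_rfl d (k - 1), AA_nil (by omega : q - 1 + 1 ≤ q) d (k - 1)]
    rw [show k - 1 - 1 + q = q + k - 2 from by omega]
    rw [mul_one, mul_one, mul_one, hh_mul]
    rw [mul_one]
    congr 1
    rw [mul_assoc, ← mul_assoc ((c⁻¹ : (Rng n)ˣ) : Rng n), Units.inv_mul, one_mul]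
  | succ t ih =>
    intro hq hpk
    -- peel off the bottom factors of the two left A's
    rw [AA_bot (by omega : q ≤ q + (t + 1)) c (k - 1),
      AA_bot (by omega : q ≤ q + (t + 1) - 1) d k,
      show k - 1 - 1 + q = q + k - 2 from by omega,
      show k - 1 + q = q + k - 2 + 1 from by omega,
      show (bval n q * ((d⁻¹ : (Rng n)ˣ) : Rng n)) =
        (bval n q * ((c⁻¹ : (Rng n)ˣ) : Rng n)) *
          ((c : Rng n) * ((d⁻¹ : (Rng n)ˣ) : Rng n)) from by
        rw [mul_assoc, ← mul_assoc ((c⁻¹ : (Rng n)ˣ) : Rng n), Units.inv_mul, one_mul]]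
    simp only [← mul_assoc]
    -- move `hh (q+k-2)` across `AA (q+(t+1)-1) (q+1) d k`
    have C1 : Commute (hh (q + k - 2) (bval n q * ((c⁻¹ : (Rng n)ˣ) : Rng n)) : HA n (n - 1))
        (AA (q + (t + 1) - 1) (q + 1) d k (bval n)) :=
      hh_AA_commute (fun r h1 h2 => by omega) _ _ _
    rw [mul_assoc (AA (q + (t + 1)) (q + 1) c (k - 1) (bval n)), C1.eq, ← mul_assoc]
    -- regroup and apply the braid relation
    rw [mul_assoc (AA (q + (t + 1)) (q + 1) c (k - 1) (bval n) *
        AA (q + (t + 1) - 1) (q + 1) d k (bval n)),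
      mul_assoc (AA (q + (t + 1)) (q + 1) c (k - 1) (bval n) *
        AA (q + (t + 1) - 1) (q + 1) d k (bval n)),
      mul_assoc (bval n q * ((c⁻¹ : (Rng n)ˣ) : Rng n)) ((c : Rng n)) ((d⁻¹ : (Rng n)ˣ) : Rng n),
      hh_braid (by omega : 1 ≤ q + k - 2) (by omega : q + k - 2 + 1 ≤ n - 1)
        (bval n q * ((c⁻¹ : (Rng n)ˣ) : Rng n)) ((c : Rng n) * ((d⁻¹ : (Rng n)ˣ) : Rng n))]
    simp only [← mul_assoc]
    -- apply the induction hypothesis at q+1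
    have IH := ih (q + 1) c d (by omega) (by omega : k - 1 + (q + 1 + t) ≤ n - 1)
    rw [show q + 1 + t = q + (t + 1) from by omega,
      show q + 1 + k - 2 = q + k - 2 + 1 from by omega] at IH
    rw [IH]
    -- undo the scalar rewriting in the middle factor
    rw [show (bval n q * ((c⁻¹ : (Rng n)ˣ) : Rng n)) * (c : Rng n) * ((d⁻¹ : (Rng n)ˣ) : Rng n) =
        (bval n q * ((d⁻¹ : (Rng n)ˣ) : Rng n)) from by
        rw [mul_assoc (bval n q), Units.inv_mul, mul_one]]
    -- move `hh (q+k-2)` back across `AA (q+(t+1)-1) (q+1) c k`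
    have C2 : Commute (hh (q + k - 2) (bval n q * ((d⁻¹ : (Rng n)ˣ) : Rng n)) : HA n (n - 1))
        (AA (q + (t + 1) - 1) (q + 1) c k (bval n)) :=
      hh_AA_commute (fun r h1 h2 => by omega) _ _ _
    rw [mul_assoc (AA (q + (t + 1)) (q + 1) d (k - 1) (bval n)), ← C2.eq, ← mul_assoc]
    -- reassemble the right-hand side
    rw [AA_bot (by omega : q ≤ q + (t + 1)) d (k - 1),
      AA_bot (by omega : q ≤ q + (t + 1) - 1) c k,
      show k - 1 - 1 + q = q + k - 2 from by omega,
      show k - 1 + q = q + k - 2 + 1 from by omega]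
    simp only [mul_assoc]
end
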